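/- Let q, p be positive integers with q ≥ p, σ, κ ∈ (0,1), ε₁ > 0, and ε_j = ε₁ κ^(((q+σ)/p)^(j-1) - 1). If (x^j) ⊆ ℝⁿ satisfies ‖x^j − x^{j+1}‖ ≤ ε_j for all j, then there exist C > 0 and x̄ ∈ ℝⁿ such that ‖x^j − x̄‖ ≤ C ε_j for all j ≥ 1; in particular (x^j) converges R-superlinearly with order (q+σ)/p. -/
import Mathlib


/-- If a sequence in `ℝⁿ` has consecutive distances bounded by the radius
sequence `ε_j`, then there are `C > 0` and a limit `x̄` with
`‖x^j − x̄‖ ≤ C ε_j` for all `j ≥ 1`; in particular the sequence converges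
R-superlinearly with order `(q+σ)/p`. -/
theorem stmt_9 (n : ℕ) (q p : ℕ) (hp : 0 < p) (hqp : p ≤ q)
    (σ κ : ℝ) (hσ : σ ∈ Set.Ioo (0:ℝ) 1) (hκ : κ ∈ Set.Ioo (0:ℝ) 1)
    (ε₁ : ℝ) (hε₁ : 0 < ε₁)
    (eps : ℕ → ℝ)
    (heps : ∀ j : ℕ, eps j = ε₁ * κ ^ ((((q:ℝ) + σ) / p) ^ ((j:ℝ) - 1) - 1))
    (x : ℕ → EuclideanSpace ℝ (Fin n))
    (hx : ∀ j : ℕ, 1 ≤ j → ‖x j - x (j + 1)‖ ≤ eps j) :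
    ∃ C > 0, ∃ xbar : EuclideanSpace ℝ (Fin n),
      Filter.Tendsto x Filter.atTop (nhds xbar) ∧
      ∀ j : ℕ, 1 ≤ j → ‖x j - xbar‖ ≤ C * eps j := by
  have hκ0 := hκ.1
  have hκ1 := hκ.2
  set Q : ℝ := ((q:ℝ) + σ) / p with hQ
  have hp' : (0:ℝ) < p := by exact_mod_cast hp
  have hQ1 : 1 < Q := by
    rw [hQ, lt_div_iff₀ hp']
    have : (p:ℝ) ≤ q := by exact_mod_cast hqp
    linarith [hσ.1]
  have hQ0 : (0:ℝ) < Q := lt_trans one_pos hQ1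
  set r : ℝ := κ ^ (Q - 1) with hr
  have hr0 : 0 < r := Real.rpow_pos_of_pos hκ0 _
  have hr1 : r < 1 := Real.rpow_lt_one (le_of_lt hκ0) hκ1 (by linarith)
  -- positivity of eps
  have heps_pos : ∀ j, 0 < eps j := fun j => by
    rw [heps j]; exact mul_pos hε₁ (Real.rpow_pos_of_pos hκ0 _)
  -- step lemma
  have hstep : ∀ k : ℕ, 1 ≤ k → eps (k + 1) ≤ r * eps k := by
    intro k hk
    rw [heps (k + 1), heps k, hr]
    rw [show κ ^ (Q - 1) * (ε₁ * κ ^ (Q ^ ((k:ℝ) - 1) - 1)) =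
        ε₁ * (κ ^ (Q - 1) * κ ^ (Q ^ ((k:ℝ) - 1) - 1)) by ring]
    rw [← Real.rpow_add hκ0]
    apply mul_le_mul_of_nonneg_left _ (le_of_lt hε₁)
    rw [Real.rpow_le_rpow_left_iff_of_base_lt_one hκ0 hκ1]
    have h1 : ((k:ℝ) + 1) - 1 = ((k:ℝ) - 1) + 1 := by push_cast; ring
    have h2 : Q ^ (((k:ℝ) + 1) - 1) = Q ^ ((k:ℝ) - 1) * Q := by
      rw [h1, Real.rpow_add hQ0, Real.rpow_one]
    have h3 : (1:ℝ) ≤ Q ^ ((k:ℝ) - 1) := by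
      apply Real.one_le_rpow (le_of_lt hQ1)
      have : (1:ℝ) ≤ (k:ℝ) := by exact_mod_cast hk
      linarith
    push_cast
    push_cast at h2
    rw [h2]
    nlinarith
  -- geometric bound from index j
  have hgeo : ∀ j : ℕ, 1 ≤ j → ∀ l : ℕ, eps (j + l) ≤ eps j * r ^ l := by
    intro j hj l
    induction l with
    | zero => simp
    | succ m ih =>
        have hjm : 1 ≤ j + m := le_trans hj (Nat.le_add_right _ _)
        calc eps (j + (m + 1)) = eps ((j + m) + 1) := by ring_nf
          _ ≤ r * eps (j + m) := hstep _ hjm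
          _ ≤ r * (eps j * r ^ m) := by
              exact mul_le_mul_of_nonneg_left ih (le_of_lt hr0)
          _ = eps j * r ^ (m + 1) := by ring
  -- distance bound for consecutive terms (shifted)
  have hdist : ∀ j : ℕ, 1 ≤ j → ∀ l : ℕ,
      dist (x (j + l)) (x (j + l + 1)) ≤ eps j * r ^ l := by
    intro j hj l
    rw [dist_eq_norm]
    exact le_trans (hx _ (le_trans hj (Nat.le_add_right _ _))) (hgeo j hj l)
  -- Cauchy and limit for shifted sequence
  have hcauchy : CauchySeq (fun m => x (m + 1)) := by
    apply cauchySeq_of_le_geometric r (eps 1) hr1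
    intro m
    have := hdist 1 le_rfl m
    simpa [Nat.add_comm 1 m] using this
  obtain ⟨xbar, hxbar⟩ := cauchySeq_tendsto_of_complete hcauchy
  have hxlim : Filter.Tendsto x Filter.atTop (nhds xbar) :=
    (Filter.tendsto_add_atTop_iff_nat 1).mp hxbar
  refine ⟨1 / (1 - r), div_pos one_pos (by linarith), xbar, hxlim, ?_⟩
  intro j hj
  have hshift : Filter.Tendsto (fun l => x (j + l)) Filter.atTop (nhds xbar) := by
    have := (Filter.tendsto_add_atTop_iff_nat j).mpr hxlim
    simpa [Nat.add_comm] using this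
  have := dist_le_of_le_geometric_of_tendsto₀ r (eps j) hr1 (hdist j hj) hshift
  simp only [Nat.add_zero] at this
  rw [← dist_eq_norm]
  calc dist (x j) xbar ≤ eps j / (1 - r) := this
    _ = 1 / (1 - r) * eps j := by ring
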